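/- Let f: ℝ^d → ℝ be convex and differentiable with L-Lipschitz gradient, with minimizer w*. Then gradient descent with step size η ∈ (0, 2/L) satisfies f(w_n) - f(w*) ≤ 2L‖w_0 - w*‖² / (4 + n L η (2 - L η)) for all n. -/

import Mathlib

/-!
Write `δₙ = f wₙ - f w*` and `R = ‖w₀ - w*‖`. The descent lemma for `L`-smooth functions gives
`δₙ₊₁ ≤ δₙ - η (2 - L η) / 2 · ‖∇f wₙ‖²`; co-coercivity of `∇f` makes `‖wₙ - w*‖` nonincreasing,
so convexity gives `δₙ ≤ ‖∇f wₙ‖ R`. Hence `δₙ₊₁ ≤ δₙ - κ δₙ²` with `κ = η (2 - L η) / (2 R²)`,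
so `1 / δₙ` grows by at least `κ` per step, starting from `δ₀ ≤ L R² / 2`.
-/

open RealInnerProductSpace Set AffineMap InnerProductSpace NNReal

lemma le_add_deriv_add_of_deriv_le {g g' : ℝ → ℝ} {K : ℝ} (hg : ∀ t, HasDerivAt g (g' t) t)
    (hg' : ∀ t ∈ Ico (0 : ℝ) 1, g' t ≤ g' 0 + K * t) :
    g 1 ≤ g 0 + g' 0 + K / 2 := by
  have hB : ∀ t, HasDerivAt (fun s => g 0 + g' 0 * s + K / 2 * s ^ 2) (g' 0 + K * t) t := by
    intro t
    have := (((hasDerivAt_id' t).const_mul (g' 0)).const_add (g 0)).add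
      ((hasDerivAt_pow 2 t).const_mul (K / 2))
    exact this.congr_deriv (by norm_num; ring)
  have := image_le_of_deriv_right_le_deriv_boundary
    (fun t _ => (hg t).continuousAt.continuousWithinAt) (fun t _ => (hg t).hasDerivWithinAt)
    (by simp) (fun t _ => (hB t).continuousAt.continuousWithinAt)
    (fun t _ => (hB t).hasDerivWithinAt) hg' (right_mem_Icc.2 zero_le_one)
  simpa using this

lemma inv_add_le_inv_of_le_sub_mul_sq {a b κ : ℝ} (hκ : 0 ≤ κ) (hb : 0 < b)
    (h : b ≤ a - κ * a ^ 2) : a⁻¹ + κ ≤ b⁻¹ := by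
  have hκa : 0 ≤ κ * a ^ 2 := by positivity
  have ha : 0 < a := by linarith
  rw [← sub_nonneg]
  have key : b⁻¹ - (a⁻¹ + κ) = (a - b - κ * a * b) / (a * b) := by field_simp; ring
  rw [key]
  apply div_nonneg _ (by positivity)
  nlinarith [mul_le_mul_of_nonneg_left (show b ≤ a by linarith) (mul_nonneg hκ ha.le)]

-- `1 / δ n` increases by at least `κ` at each step.
lemma le_div_one_add_mul_of_le_sub_mul_sq {δ : ℕ → ℝ} {κ B : ℝ} (hκ : 0 ≤ κ)
    (hδ : ∀ n, 0 ≤ δ n) (hstep : ∀ n, δ (n + 1) ≤ δ n - κ * δ n ^ 2) (h0 : δ 0 ≤ B) (n : ℕ) :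
    δ n ≤ B / (1 + n * κ * B) := by
  have hanti : Antitone δ := antitone_nat_of_succ_le fun n => by
    nlinarith [hstep n, mul_nonneg hκ (sq_nonneg (δ n))]
  have hB : 0 ≤ B := (hδ 0).trans h0
  induction n with
  | zero => simpa using h0
  | succ n ih =>
    rcases (hδ (n + 1)).eq_or_lt with hzero | hpos
    · rw [← hzero]; positivity
    have hδn : 0 < δ n := hpos.trans_le (hanti n.le_succ)
    have hBpos : 0 < B := hpos.trans_le ((hanti (Nat.zero_le _)).trans h0)
    have hinv : (1 + n * κ * B) / B ≤ (δ n)⁻¹ := by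
      simpa only [inv_div] using inv_anti₀ hδn ih
    have hinv' : (1 + (n + 1 : ℕ) * κ * B) / B ≤ (δ (n + 1))⁻¹ := by
      have := inv_add_le_inv_of_le_sub_mul_sq hκ hpos (hstep n)
      have e : (1 + (n + 1 : ℕ) * κ * B) / B = (1 + n * κ * B) / B + κ := by
        push_cast; field_simp; ring
      linarith
    simpa only [inv_div, inv_inv] using inv_anti₀ (by positivity) hinv'

lemma norm_sub_smul_le_of_mul_sq_le_inner {E : Type*} [NormedAddCommGroup E]
    [InnerProductSpace ℝ E] {v g : E} {η : ℝ} (hη : 0 ≤ η)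
    (h : η * ‖g‖ ^ 2 ≤ 2 * ⟪g, v⟫) : ‖v - η • g‖ ≤ ‖v‖ := by
  refine (sq_le_sq₀ (norm_nonneg _) (norm_nonneg _)).1 ?_
  rw [norm_sub_sq_real, real_inner_smul_right, real_inner_comm, norm_smul,
    Real.norm_of_nonneg hη]
  nlinarith [mul_le_mul_of_nonneg_left h hη]

variable {F : Type*} [NormedAddCommGroup F] [InnerProductSpace ℝ F] [CompleteSpace F]
  {f : F → ℝ} {K : ℝ≥0}

lemma hasDerivAt_comp_lineMap {x y : F} {t : ℝ} (hf : DifferentiableAt ℝ f (lineMap x y t)) :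
    HasDerivAt (fun s => f (lineMap x y s)) ⟪gradient f (lineMap x y t), y - x⟫ t := by
  have := hf.hasGradientAt.hasFDerivAt.comp_hasDerivAt t (hasDerivAt_lineMap (a := x) (b := y))
  rwa [toDual_apply_apply] at this

lemma ConvexOn.add_inner_gradient_le (hconv : ConvexOn ℝ univ f) {x : F}
    (hf : DifferentiableAt ℝ f x) (y : F) : f x + ⟪gradient f x, y - x⟫ ≤ f y := by
  have hline : ConvexOn ℝ univ (fun s : ℝ => f (lineMap x y s)) :=
    hconv.comp_affineMap (lineMap x y)
  have := hline.le_slope_of_hasDerivAt (mem_univ 0) (mem_univ 1) zero_lt_one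
    (hasDerivAt_comp_lineMap (by simpa using hf))
  simp only [slope_def_field, lineMap_apply_zero, lineMap_apply_one] at this
  linarith

lemma le_add_inner_gradient_add_sq (hdiff : Differentiable ℝ f)
    (hlip : LipschitzWith K (gradient f)) (x y : F) :
    f y ≤ f x + ⟪gradient f x, y - x⟫ + K / 2 * ‖y - x‖ ^ 2 := by
  have key := le_add_deriv_add_of_deriv_le (K := K * ‖y - x‖ ^ 2)
    (fun t => hasDerivAt_comp_lineMap (hdiff _)) fun t ht => by
      have hxt : lineMap x y t - x = t • (y - x) := lineMap_vsub_left x y t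
      calc ⟪gradient f (lineMap x y t), y - x⟫
          = ⟪gradient f x, y - x⟫ + ⟪gradient f (lineMap x y t) - gradient f x, y - x⟫ := by
            rw [inner_sub_left]; ring
        _ ≤ ⟪gradient f x, y - x⟫ + K * ‖lineMap x y t - x‖ * ‖y - x‖ := by
            gcongr
            exact (real_inner_le_norm _ _).trans
              (mul_le_mul_of_nonneg_right (hlip.norm_sub_le _ _) (norm_nonneg _))
        _ = ⟪gradient f (lineMap x y (0 : ℝ)), y - x⟫ + K * ‖y - x‖ ^ 2 * t := by
            rw [hxt, norm_smul, Real.norm_of_nonneg ht.1, lineMap_apply_zero]; ring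
  simp only [lineMap_apply_zero, lineMap_apply_one] at key
  linarith

-- At `z = y - (∇f y - ∇f x) / K`, convexity bounds `f z` below from `x`, smoothness above from `y`.
lemma ConvexOn.add_inner_gradient_add_sq_div_le (hconv : ConvexOn ℝ univ f)
    (hdiff : Differentiable ℝ f) (hlip : LipschitzWith K (gradient f)) (x y : F) :
    f x + ⟪gradient f x, y - x⟫ + ‖gradient f y - gradient f x‖ ^ 2 / (2 * K) ≤ f y := by
  set u := gradient f y - gradient f x
  set z := y - (K⁻¹ : ℝ) • u
  have hxz := hconv.add_inner_gradient_le (hdiff x) z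
  have hzy := le_add_inner_gradient_add_sq hdiff hlip y z
  have hzx : z - x = (y - x) - (K⁻¹ : ℝ) • u := by simp only [z]; abel
  have hzy' : z - y = -((K⁻¹ : ℝ) • u) := by simp only [z]; abel
  have hu : ⟪gradient f y, u⟫ - ⟪gradient f x, u⟫ = ‖u‖ ^ 2 := by
    rw [← inner_sub_left, real_inner_self_eq_norm_sq]
  rw [hzx, inner_sub_right, real_inner_smul_right] at hxz
  rw [hzy', inner_neg_right, real_inner_smul_right, norm_neg, norm_smul, Real.norm_eq_abs,
    abs_inv, NNReal.abs_eq] at hzy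
  have : ‖u‖ ^ 2 / (2 * K) = (K : ℝ)⁻¹ * (⟪gradient f y, u⟫ - ⟪gradient f x, u⟫)
      - K / 2 * ((K : ℝ)⁻¹ * ‖u‖) ^ 2 := by
    rw [hu]; field_simp; ring
  linarith

lemma ConvexOn.sq_norm_gradient_sub_div_le_inner (hconv : ConvexOn ℝ univ f)
    (hdiff : Differentiable ℝ f) (hlip : LipschitzWith K (gradient f)) (x y : F) :
    ‖gradient f x - gradient f y‖ ^ 2 / K ≤ ⟪gradient f x - gradient f y, x - y⟫ := by
  have hxy := hconv.add_inner_gradient_add_sq_div_le hdiff hlip x y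
  have hyx := hconv.add_inner_gradient_add_sq_div_le hdiff hlip y x
  rw [norm_sub_rev] at hyx
  have : ⟪gradient f x - gradient f y, x - y⟫
      = -⟪gradient f x, y - x⟫ - ⟪gradient f y, x - y⟫ := by
    rw [inner_sub_left, ← neg_sub x y, inner_neg_right]; ring
  have halves : ‖gradient f y - gradient f x‖ ^ 2 / K
      = 2 * (‖gradient f y - gradient f x‖ ^ 2 / (2 * K)) := by ring
  rw [this, norm_sub_rev]
  linarith

lemma ConvexOn.sub_le_norm_gradient_mul_norm_sub (hconv : ConvexOn ℝ univ f) {x : F}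
    (hf : DifferentiableAt ℝ f x) (y : F) : f x - f y ≤ ‖gradient f x‖ * ‖x - y‖ := by
  have h := hconv.add_inner_gradient_le hf y
  rw [← neg_sub x y, inner_neg_right] at h
  linarith [real_inner_le_norm (gradient f x) (x - y)]

lemma apply_sub_smul_gradient_le (hdiff : Differentiable ℝ f)
    (hlip : LipschitzWith K (gradient f)) (η : ℝ) (x : F) :
    f (x - η • gradient f x) ≤ f x - η * (2 - K * η) / 2 * ‖gradient f x‖ ^ 2 := by
  have h := le_add_inner_gradient_add_sq hdiff hlip x (x - η • gradient f x)
  rw [sub_sub_cancel_left, inner_neg_right, real_inner_smul_right, real_inner_self_eq_norm_sq,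
    norm_neg, norm_smul, Real.norm_eq_abs, mul_pow, sq_abs] at h
  linarith

lemma ConvexOn.norm_sub_smul_gradient_sub_le (hconv : ConvexOn ℝ univ f)
    (hdiff : Differentiable ℝ f) (hlip : LipschitzWith K (gradient f)) {η : ℝ} (hη : 0 ≤ η)
    (hηK : η ≤ 2 / K) {xstar : F} (hstar : gradient f xstar = 0) (x : F) :
    ‖x - η • gradient f x - xstar‖ ≤ ‖x - xstar‖ := by
  have hco := hconv.sq_norm_gradient_sub_div_le_inner hdiff hlip x xstar
  rw [hstar, sub_zero] at hco
  rw [sub_right_comm]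
  refine norm_sub_smul_le_of_mul_sq_le_inner hη ?_
  calc η * ‖gradient f x‖ ^ 2 ≤ 2 / K * ‖gradient f x‖ ^ 2 := by gcongr
    _ = 2 * (‖gradient f x‖ ^ 2 / K) := by ring
    _ ≤ 2 * ⟪gradient f x, x - xstar⟫ := by gcongr

lemma le_sub_div_sq_mul_sq {δ δ' G R c : ℝ} (hc : 0 ≤ c) (hδ : 0 ≤ δ) (hδG : δ ≤ G * R)
    (h : δ' ≤ δ - c * G ^ 2) : δ' ≤ δ - c / R ^ 2 * δ ^ 2 := by
  have : δ ^ 2 / R ^ 2 ≤ G ^ 2 :=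
    div_le_of_le_mul₀ (sq_nonneg R) (sq_nonneg G) (mul_pow G R 2 ▸ pow_le_pow_left₀ hδ hδG 2)
  have e : c / R ^ 2 * δ ^ 2 = c * (δ ^ 2 / R ^ 2) := by ring
  linarith [mul_le_mul_of_nonneg_left this hc]

theorem stmt_11 {d : ℕ} (f : EuclideanSpace ℝ (Fin d) → ℝ) (L η : ℝ) (hL : 0 < L)
    (hconv : ConvexOn ℝ Set.univ f)
    (hdiff : Differentiable ℝ f)
    (hlip : LipschitzWith (Real.toNNReal L) (gradient f))
    (wstar : EuclideanSpace ℝ (Fin d)) (hmin : ∀ w, f wstar ≤ f w)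
    (hη0 : 0 < η) (hη2 : η < 2 / L)
    (w : ℕ → EuclideanSpace ℝ (Fin d))
    (hrec : ∀ n, w (n + 1) = w n - η • gradient f (w n)) :
    ∀ n : ℕ, f (w n) - f wstar ≤
      2 * L * ‖w 0 - wstar‖ ^ 2 / (4 + (n : ℝ) * L * η * (2 - L * η)) := by
  intro n
  have hK : ((Real.toNNReal L : ℝ≥0) : ℝ) = L := Real.coe_toNNReal L hL.le
  have hLη : L * η < 2 := by rwa [lt_div_iff₀ hL, mul_comm] at hη2
  have hstar : gradient f wstar = 0 := by
    rw [gradient, (IsLocalMin.fderiv_eq_zero (.of_forall hmin)), map_zero]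
  set R := ‖w 0 - wstar‖
  have hdist : ∀ n, ‖w n - wstar‖ ≤ R := by
    have hanti : Antitone fun k => ‖w k - wstar‖ := antitone_nat_of_succ_le fun k => by
      rw [hrec k]
      exact hconv.norm_sub_smul_gradient_sub_le hdiff hlip hη0.le
        (by rw [hK]; exact hη2.le) hstar (w k)
    exact fun n => hanti n.zero_le
  have hstep : ∀ k, f (w (k + 1)) - f wstar ≤
      f (w k) - f wstar - η * (2 - L * η) / 2 / R ^ 2 * (f (w k) - f wstar) ^ 2 := by
    intro k
    have hdesc := hrec k ▸ apply_sub_smul_gradient_le hdiff hlip η (w k)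
    have hgap := (hconv.sub_le_norm_gradient_mul_norm_sub (hdiff _) wstar).trans
      (mul_le_mul_of_nonneg_left (hdist k) (norm_nonneg _))
    rw [hK] at hdesc
    exact le_sub_div_sq_mul_sq (by nlinarith) (sub_nonneg.2 (hmin _)) hgap (by linarith)
  have h0 : f (w 0) - f wstar ≤ L / 2 * R ^ 2 := by
    have := le_add_inner_gradient_add_sq hdiff hlip wstar (w 0)
    rw [hstar, inner_zero_left, hK] at this
    linarith
  refine (le_div_one_add_mul_of_le_sub_mul_sq (by positivity) (fun k => sub_nonneg.2 (hmin _))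
    hstep h0 n).trans_eq ?_
  rcases eq_or_ne R 0 with hR | hR
  · simp [hR]
  · field_simp
    ring
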